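/- Let G be drawn from the (n, p, q)-planted partition model. For any 0 < δ < 1, with probability at least 1 − δ, simultaneously for all rooted binary trees T with leaves V, |cost_G(T) − E[cost_G(T)]| ≤ (n²/2)·√(2n·ln(2n) + ln(2/δ)). -/

import Mathlib

open Finset

/-- A rooted binary tree whose leaves are labeled by elements of `Fin n`. -/
inductive HTree (n : ℕ) : Type where
  | leaf : Fin n → HTree n
  | node : HTree n → HTree n → HTree n

namespace HTree

variable {n : ℕ}

/-- The list of leaf labels, left to right. -/
def leafList : HTree n → List (Fin n)
  | .leaf v => [v]
  | .node l r => l.leafList ++ r.leafList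

/-- The set of leaf labels of a tree. -/
def leaves (T : HTree n) : Finset (Fin n) := T.leafList.toFinset

/-- `T` is a hierarchical clustering tree of the whole vertex set `Fin n`:
its leaves are in one-to-one correspondence with `Fin n`. -/
def IsFullTree (T : HTree n) : Prop := T.leafList.Nodup ∧ T.leaves = Finset.univ

/-- `|leaves(T[i ∨ j])|`: the number of leaves of the subtree rooted at the
lowest common ancestor of leaves `i` and `j`. -/
def lcaSize : HTree n → Fin n → Fin n → ℕ
  | .leaf _, _, _ => 1
  | .node l r, i, j =>
    if i ∈ l.leaves ∧ j ∈ l.leaves then l.lcaSize i j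
    else if i ∈ r.leaves ∧ j ∈ r.leaves then r.lcaSize i j
    else (l.leaves ∪ r.leaves).card

/-- `cost_G(T) = Σ_{{i,j}} w_{ij} |leaves(T[i ∨ j])|`, the sum being over
unordered pairs (represented as ordered pairs `p.1 < p.2`). -/
def pairCost (w : Fin n → Fin n → ℝ) (T : HTree n) : ℝ :=
  ∑ p ∈ Finset.univ.filter (fun p : Fin n × Fin n => p.1 < p.2),
    w p.1 p.2 * (T.lcaSize p.1 p.2 : ℝ)

/-- `w(A, B)`: total weight of edges between `A` and `B`. -/
def cut (w : Fin n → Fin n → ℝ) (A B : Finset (Fin n)) : ℝ :=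
  ∑ i ∈ A, ∑ j ∈ B, w i j

/-- The sum-of-splits formulation of the cost:
`Σ over internal splits S → (S₁,S₂) of |S| ⬝ w(S₁,S₂)`. -/
def splitCost (w : Fin n → Fin n → ℝ) : HTree n → ℝ
  | .leaf _ => 0
  | .node l r =>
      ((l.leaves ∪ r.leaves).card : ℝ) * cut w l.leaves r.leaves
        + splitCost w l + splitCost w r

/-- `Subtree t T`: `t` occurs as a subtree of `T`. -/
inductive Subtree : HTree n → HTree n → Prop
  | refl (t : HTree n) : Subtree t t
  | left {t l r : HTree n} : Subtree t l → Subtree t (.node l r)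
  | right {t l r : HTree n} : Subtree t r → Subtree t (.node l r)

end HTree


/-!
Each cost `cost_G(T)` is a weighted sum `∑ wₑ Xₑ` of the independent edge indicators, with
weights `wₑ = |leaves(T[i ∨ j])| ∈ [0, n]`, so by Hoeffding's inequality it deviates from its mean
by at least `t` with probability at most `2 exp(-2t² / ∑ wₑ²) ≤ 2 exp(-4t² / n⁴)`. A full tree is
determined by its preorder code, a word of length `2n - 1` over an alphabet of `n + 1` letters, so
there are at most `(2n)^(2n)` of them, and the choice of `t` makes the union bound equal to `δ`.
-/

open MeasureTheory ProbabilityTheory Real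
open scoped NNReal ENNReal

namespace ProbabilityTheory.HasSubgaussianMGF

variable {Ω : Type*} {mΩ : MeasurableSpace Ω} {μ : Measure Ω} {X : Ω → ℝ}

lemma mono {c d : ℝ≥0} (h : HasSubgaussianMGF X c μ) (hcd : c ≤ d) :
    HasSubgaussianMGF X d μ where
  integrable_exp_mul := h.integrable_exp_mul
  mgf_le t := (h.mgf_le t).trans (exp_le_exp.mpr (by gcongr))

lemma measureReal_abs_ge_le [IsFiniteMeasure μ] {c : ℝ≥0}
    (h : HasSubgaussianMGF X c μ) {ε : ℝ} (hε : 0 ≤ ε) :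
    μ.real {ω | ε ≤ |X ω|} ≤ 2 * exp (-ε ^ 2 / (2 * c)) := by
  have hsub : {ω | ε ≤ |X ω|} ⊆ {ω | ε ≤ X ω} ∪ {ω | ε ≤ (-X) ω} := fun ω hω ↦ by
    simpa [le_abs] using hω
  calc μ.real {ω | ε ≤ |X ω|} ≤ μ.real {ω | ε ≤ X ω} + μ.real {ω | ε ≤ (-X) ω} :=
        (measureReal_mono hsub).trans (measureReal_union_le _ _)
    _ ≤ exp (-ε ^ 2 / (2 * c)) + exp (-ε ^ 2 / (2 * c)) :=
        add_le_add (h.measure_ge_le hε) (h.neg.measure_ge_le hε)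
    _ = 2 * exp (-ε ^ 2 / (2 * c)) := by ring

end ProbabilityTheory.HasSubgaussianMGF

/-- Two-sided Hoeffding inequality. -/
lemma ProbabilityTheory.iIndepFun.measureReal_abs_sum_sub_integral_ge_le
    {Ω ι : Type*} {mΩ : MeasurableSpace Ω} {μ : Measure Ω} {X : ι → Ω → ℝ}
    (h_indep : iIndepFun X μ) {s : Finset ι} (hm : ∀ i ∈ s, AEMeasurable (X i) μ)
    {a b : ι → ℝ} (hab : ∀ i ∈ s, ∀ᵐ ω ∂μ, X i ω ∈ Set.Icc (a i) (b i)) {V : ℝ}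
    (hV : ∑ i ∈ s, (b i - a i) ^ 2 ≤ V) {ε : ℝ} (hε : 0 ≤ ε) :
    μ.real {ω | ε ≤ |∑ i ∈ s, X i ω - μ[fun ω ↦ ∑ i ∈ s, X i ω]|}
      ≤ 2 * exp (-2 * ε ^ 2 / V) := by
  have : IsProbabilityMeasure μ := h_indep.isProbabilityMeasure
  have h_centered : iIndepFun (fun i ω ↦ X i ω - μ[X i]) μ :=
    h_indep.comp (fun i (x : ℝ) ↦ x - ∫ ω, X i ω ∂μ) fun _ ↦ measurable_sub_const _
  have h_sum := HasSubgaussianMGF.sum_of_iIndepFun h_centered (s := s)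
    fun i hi ↦ hasSubgaussianMGF_of_mem_Icc (hm i hi) (hab i hi)
  have hV0 : 0 ≤ V := (Finset.sum_nonneg fun i _ ↦ sq_nonneg _).trans hV
  have h_param : ∑ i ∈ s, (‖b i - a i‖₊ / 2) ^ 2 ≤ (V / 4).toNNReal := by
    rw [← NNReal.coe_le_coe, Real.coe_toNNReal _ (by positivity)]
    push_cast
    simp only [Real.norm_eq_abs, div_pow, sq_abs, ← Finset.sum_div]
    linarith
  have h_integral : μ[fun ω ↦ ∑ i ∈ s, X i ω] = ∑ i ∈ s, μ[X i] :=
    integral_finsetSum s fun i hi ↦ Integrable.of_mem_Icc _ _ (hm i hi) (hab i hi)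
  have h_tail := (h_sum.mono h_param).measureReal_abs_ge_le hε
  simp only [Finset.sum_sub_distrib] at h_tail
  rw [h_integral]
  refine h_tail.trans_eq ?_
  rw [Real.coe_toNNReal _ (by positivity)]
  ring_nf

lemma measureReal_abs_sum_ite_sub_integral_ge_le {ι : Type*} [Fintype ι] {ν : ι → Measure Bool}
    [∀ i, IsProbabilityMeasure (ν i)] {s : Finset ι} {c : ι → ℝ} (hc : ∀ i ∈ s, 0 ≤ c i)
    {V : ℝ} (hV : ∑ i ∈ s, c i ^ 2 ≤ V) {ε : ℝ} (hε : 0 ≤ ε) :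
    (Measure.pi ν).real {ω | ε ≤ |∑ i ∈ s, (if ω i then c i else 0)
        - ∫ ω', ∑ i ∈ s, (if ω' i then c i else 0) ∂Measure.pi ν|}
      ≤ 2 * exp (-2 * ε ^ 2 / V) := by
  have hm (i : ι) : Measurable fun b : Bool ↦ if b then c i else 0 := .of_discrete
  have h_indep : iIndepFun (fun i (ω : ι → Bool) ↦ if ω i then c i else 0) (Measure.pi ν) :=
    iIndepFun_pi fun i ↦ (hm i).aemeasurable
  refine h_indep.measureReal_abs_sum_sub_integral_ge_le (a := 0)
    (fun i _ ↦ ((hm i).comp (measurable_pi_apply i)).aemeasurable)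
    (fun i hi ↦ ae_of_all _ fun ω ↦ ?_) (by simpa using hV) hε
  split <;> simp [hc i hi]

lemma MeasureTheory.one_sub_card_mul_le_measure_forall {Ω ι : Type*} [Finite ι]
    {mΩ : MeasurableSpace Ω} {μ : Measure Ω} [IsProbabilityMeasure μ] {P : ι → Ω → Prop}
    {ε : ℝ≥0∞} (h : ∀ i, μ {ω | ¬ P i ω} ≤ ε) :
    1 - Nat.card ι * ε ≤ μ {ω | ∀ i, P i ω} := by
  have : Fintype ι := Fintype.ofFinite ι
  have h_compl : {ω | ∀ i, P i ω}ᶜ = ⋃ i, {ω | ¬ P i ω} := by ext; simp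
  rw [tsub_le_iff_right]
  calc 1 = μ Set.univ := measure_univ.symm
    _ ≤ μ {ω | ∀ i, P i ω} + μ {ω | ∀ i, P i ω}ᶜ := measure_univ_le_add_compl _
    _ ≤ μ {ω | ∀ i, P i ω} + ∑ i, μ {ω | ¬ P i ω} := by
        rw [h_compl]; gcongr; exact measure_iUnion_fintype_le μ _
    _ ≤ μ {ω | ∀ i, P i ω} + ∑ _i : ι, ε := by gcongr with i; exact h i
    _ = μ {ω | ∀ i, P i ω} + Nat.card ι * ε := by simp [Nat.card_eq_fintype_card]

lemma two_mul_exp_neg_two_mul_sq_div_eq {n : ℕ} (hn : 1 ≤ n) {δ : ℝ} (hδ0 : 0 < δ)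
    (hδ2 : δ ≤ 2) :
    2 * exp (-2 * ((n : ℝ) ^ 2 / 2 * √(2 * n * log (2 * n) + log (2 / δ))) ^ 2 / (n ^ 4 / 2))
      = δ / (2 * n) ^ (2 * n) := by
  have hn0 : (0 : ℝ) < n := by exact_mod_cast hn
  have hL : 0 ≤ 2 * n * log (2 * n) + log (2 / δ) := by
    have : (1 : ℝ) ≤ n := by exact_mod_cast hn
    have := log_nonneg (show (1 : ℝ) ≤ 2 * n by linarith)
    have := log_nonneg (show (1 : ℝ) ≤ 2 / δ by rw [le_div_iff₀ hδ0]; linarith)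
    positivity
  rw [mul_pow, sq_sqrt hL]
  have h_exponent :
      -2 * ((n : ℝ) ^ 2 / 2) ^ 2 * (2 * n * log (2 * n) + log (2 / δ)) / (n ^ 4 / 2)
        = -((2 * n : ℕ) * log (2 * n)) + -log (2 / δ) := by
    push_cast; field_simp; ring
  rw [← mul_assoc, h_exponent, exp_add, exp_neg, exp_neg, exp_nat_mul, exp_log (by positivity),
    exp_log (by positivity)]
  field_simp

namespace HTree

variable {n : ℕ}

@[simp]
lemma leaves_node (l r : HTree n) : (node l r).leaves = l.leaves ∪ r.leaves := by
  simp [leaves, leafList]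

lemma lcaSize_le_card_leaves (T : HTree n) (i j : Fin n) : T.lcaSize i j ≤ #T.leaves := by
  induction T with
  | leaf v => simp [lcaSize, leaves, leafList]
  | node l r ihl ihr =>
    rw [lcaSize, leaves_node]
    split_ifs
    · exact ihl.trans (card_le_card subset_union_left)
    · exact ihr.trans (card_le_card subset_union_right)
    · rfl

lemma lcaSize_le (T : HTree n) (i j : Fin n) : T.lcaSize i j ≤ n :=
  (T.lcaSize_le_card_leaves i j).trans (card_le_univ _ |>.trans_eq (Fintype.card_fin n))

def encode : HTree n → List (Option (Fin n))
  | leaf v => [some v]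
  | node l r => none :: (l.encode ++ r.encode)

lemma encode_append_inj {t₁ t₂ : HTree n} {s₁ s₂ : List (Option (Fin n))}
    (h : t₁.encode ++ s₁ = t₂.encode ++ s₂) : t₁ = t₂ ∧ s₁ = s₂ := by
  induction t₁ generalizing t₂ s₁ s₂ with
  | leaf v => cases t₂ <;> simp_all [encode]
  | node l r ihl ihr =>
    cases t₂ with
    | leaf w => simp [encode] at h
    | node l₂ r₂ =>
      simp only [encode, List.cons_append, List.cons.injEq, List.append_assoc, true_and] at h
      obtain ⟨rfl, hr⟩ := ihl h
      obtain ⟨rfl, rfl⟩ := ihr hr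
      exact ⟨rfl, rfl⟩

lemma encode_injective : Function.Injective (encode : HTree n → _) := fun _ _ h ↦
  (encode_append_inj (s₁ := []) (s₂ := []) (by simpa using h)).1

lemma length_encode (T : HTree n) : T.encode.length + 1 = 2 * T.leafList.length := by
  induction T with
  | leaf v => simp [encode, leafList]
  | node l r ihl ihr =>
    simp only [encode, leafList, List.length_cons, List.length_append]
    omega

lemma IsFullTree.length_leafList {T : HTree n} (h : T.IsFullTree) : T.leafList.length = n := by
  have := List.toFinset_card_of_nodup h.1
  rwa [show T.leafList.toFinset = univ from h.2, card_univ, Fintype.card_fin, eq_comm] at this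

lemma IsFullTree.length_encode {T : HTree n} (h : T.IsFullTree) :
    T.encode.length = 2 * n - 1 := by
  have := T.length_encode
  rw [h.length_leafList] at this
  omega

def fullTreeCode (T : {T : HTree n // T.IsFullTree}) :
    List.Vector (Option (Fin n)) (2 * n - 1) :=
  ⟨T.1.encode, T.2.length_encode⟩

lemma fullTreeCode_injective : Function.Injective (fullTreeCode (n := n)) :=
  fun _ _ h ↦ Subtype.ext (encode_injective (congrArg Subtype.val h))

instance : Finite {T : HTree n // T.IsFullTree} :=
  .of_injective _ fullTreeCode_injective

lemma card_isFullTree_le : Nat.card {T : HTree n // T.IsFullTree} ≤ (2 * n) ^ (2 * n) := by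
  calc Nat.card {T : HTree n // T.IsFullTree} ≤ (n + 1) ^ (2 * n - 1) := by
        simpa using Nat.card_le_card_of_injective _ fullTreeCode_injective
    _ ≤ (2 * n) ^ (2 * n) := by
        rcases n.eq_zero_or_pos with rfl | hn
        · simp
        · calc (n + 1) ^ (2 * n - 1) ≤ (2 * n) ^ (2 * n - 1) := by gcongr; omega
            _ ≤ (2 * n) ^ (2 * n) := Nat.pow_le_pow_right (by omega) (by omega)

/-- `cost_G(T)` for the graph `G` with edge set `{e | e.1 < e.2 ∧ ω e}`. -/
def graphCost (T : HTree n) (ω : Fin n × Fin n → Bool) : ℝ :=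
  ∑ e ∈ univ.filter (fun e : Fin n × Fin n => e.1 < e.2),
    if ω e then (T.lcaSize e.1 e.2 : ℝ) else 0

lemma measureReal_abs_graphCost_sub_integral_ge_le {ν : Fin n × Fin n → Measure Bool}
    [∀ e, IsProbabilityMeasure (ν e)] (T : HTree n) {ε : ℝ} (hε : 0 ≤ ε) :
    (Measure.pi ν).real {ω | ε ≤ |T.graphCost ω - ∫ ω', T.graphCost ω' ∂Measure.pi ν|}
      ≤ 2 * exp (-2 * ε ^ 2 / (n ^ 4 / 2)) := by
  refine measureReal_abs_sum_ite_sub_integral_ge_le (fun _ _ ↦ Nat.cast_nonneg _) ?_ hε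
  calc ∑ e ∈ univ.filter (fun e : Fin n × Fin n => e.1 < e.2), (T.lcaSize e.1 e.2 : ℝ) ^ 2
      ≤ ∑ e ∈ univ.filter (fun e : Fin n × Fin n => e.1 < e.2), (n : ℝ) ^ 2 := by
        gcongr with e; exact_mod_cast T.lcaSize_le e.1 e.2
    _ = n.choose 2 * (n : ℝ) ^ 2 := by
        rw [sum_const, Fintype.card_product_filter_lt, Fintype.card_fin, nsmul_eq_mul]
    _ ≤ (n : ℝ) ^ 2 / 2 * (n : ℝ) ^ 2 := by
        gcongr; simpa using Nat.choose_le_pow_div (α := ℝ) 2 n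
    _ = n ^ 4 / 2 := by ring

theorem uniform_concentration_graphCost (hn : 1 ≤ n)
    {ν : Fin n × Fin n → Measure Bool} [∀ e, IsProbabilityMeasure (ν e)] {δ : ℝ} (hδ0 : 0 < δ)
    (hδ2 : δ ≤ 2) :
    ENNReal.ofReal (1 - δ) ≤ Measure.pi ν {ω | ∀ T : HTree n, T.IsFullTree →
      |T.graphCost ω - ∫ ω', T.graphCost ω' ∂Measure.pi ν|
        ≤ (n : ℝ) ^ 2 / 2 * √(2 * n * log (2 * n) + log (2 / δ))} := by
  have h_tail (T : {T : HTree n // T.IsFullTree}) : Measure.pi ν {ω | ¬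
      |T.1.graphCost ω - ∫ ω', T.1.graphCost ω' ∂Measure.pi ν|
        ≤ (n : ℝ) ^ 2 / 2 * √(2 * n * log (2 * n) + log (2 / δ))}
      ≤ ENNReal.ofReal (δ / (2 * n) ^ (2 * n)) := by
    rw [← two_mul_exp_neg_two_mul_sq_div_eq hn hδ0 hδ2, ← ofReal_measureReal]
    refine ENNReal.ofReal_le_ofReal ((measureReal_mono fun ω hω ↦ (not_le.mp hω).le).trans ?_)
    exact T.1.measureReal_abs_graphCost_sub_integral_ge_le (by positivity)
  have h_union : (Nat.card {T : HTree n // T.IsFullTree} : ℝ≥0∞)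
      * ENNReal.ofReal (δ / (2 * n) ^ (2 * n)) ≤ ENNReal.ofReal δ := by
    calc _ ≤ ENNReal.ofReal ((2 * n) ^ (2 * n)) * ENNReal.ofReal (δ / (2 * n) ^ (2 * n)) := by
          gcongr
          rw [← ENNReal.ofReal_natCast]
          exact ENNReal.ofReal_le_ofReal (by exact_mod_cast card_isFullTree_le)
      _ = ENNReal.ofReal δ := by
          rw [← ENNReal.ofReal_mul (by positivity), mul_div_cancel₀ _ (by positivity)]
  calc ENNReal.ofReal (1 - δ) = 1 - ENNReal.ofReal δ := by
        rw [ENNReal.ofReal_sub _ hδ0.le, ENNReal.ofReal_one]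
    _ ≤ _ := (tsub_le_tsub_left h_union 1).trans (one_sub_card_mul_le_measure_forall h_tail)
    _ = _ := by simp only [Subtype.forall]

end HTree

open MeasureTheory in
/-- Concentration for the `(n,p,q)`-planted partition model: the random graph is a
product of independent Bernoulli edge indicators (probability `p` inside the two
clusters `{i < n/2}`, `{i ≥ n/2}`, and `q` across).  With probability at least
`1 - δ`, simultaneously for all full trees `T`,
`|cost_G(T) - E[cost_G(T)]| ≤ (n²/2)√(2n ln(2n) + ln(2/δ))`. -/
theorem planted_partition_concentration (n : ℕ) (hn2 : 2 ≤ n)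
    (p q : ℝ) (hqp : q ≤ p) (hp1 : p ≤ 1)
    (δ : ℝ) (hδ0 : 0 < δ) (hδ1 : δ < 1)
    (μ : Measure ((Fin n × Fin n) → Bool))
    (hμ : μ = Measure.pi (fun e =>
      (PMF.bernoulli
        (Real.toNNReal (if (e.1.val < n / 2 ↔ e.2.val < n / 2) then p else q))
        (by split_ifs <;> exact Real.toNNReal_le_one.mpr (by linarith))).toMeasure)) :
    ENNReal.ofReal (1 - δ) ≤
      μ {ω | ∀ T : HTree n, T.IsFullTree →
        |(∑ e ∈ Finset.univ.filter (fun e : Fin n × Fin n => e.1 < e.2),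
            if ω e then (T.lcaSize e.1 e.2 : ℝ) else 0)
          - ∫ ω', (∑ e ∈ Finset.univ.filter (fun e : Fin n × Fin n => e.1 < e.2),
              if ω' e then (T.lcaSize e.1 e.2 : ℝ) else 0) ∂μ|
          ≤ ((n : ℝ) ^ 2 / 2) *
              Real.sqrt (2 * n * Real.log (2 * n) + Real.log (2 / δ))} := by
  subst hμ
  exact HTree.uniform_concentration_graphCost (by omega) hδ0 (by linarith)
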